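/- Let 𝒰 be a nonempty compact convex set of real m×n matrices, 𝒜_𝒰(x) = {Ax : A ∈ 𝒰}; let C ⊆ ℝⁿ be nonempty closed convex and Q ⊆ ℝᵐ a closed convex pointed cone with Q ≠ {0} and Q ≠ ℝᵐ. Assume: (i) C and Q are polyhedral (intersections of finitely many closed halfspaces) and 𝒰 is the convex hull of finitely many matrices A₁, …, A_k; (ii) there exists σ > 0 such that σ·Bₘ ⊆ A(Bₙ) for every A ∈ 𝒰, where Bₙ, Bₘ are the closed unit balls of ℝⁿ and ℝᵐ (uniform covering); (iii) the interior of ⋂_{A∈𝒰} A⁻¹(Q) is nonempty. Then, if Solv = {x ∈ C : 𝒜_𝒰(x) ⊆ Q} is nonempty, there exists τ > 0 such that dist(x, Solv) ≤ τ·[e(𝒜_𝒰(x), Q) + dist(x, C)] for every x ∈ ℝⁿ. -/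

import Mathlib

open Metric Set Pointwise

/-- The set-valued map `x ↦ {A x : A ∈ 𝒰}` associated with a set `𝒰` of `m × n` matrices. -/
noncomputable def AU {m n : ℕ} (U : Set (Matrix (Fin m) (Fin n) ℝ))
    (x : EuclideanSpace ℝ (Fin n)) : Set (EuclideanSpace ℝ (Fin m)) :=
  (fun A : Matrix (Fin m) (Fin n) ℝ => Matrix.toEuclideanLin A x) '' U

/-- The excess of the set `A` over the set `S`: `e(A,S) = sup_{a ∈ A} dist(a, S)`. -/
noncomputable def exc {α : Type*} [MetricSpace α] (A S : Set α) : ℝ :=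
  sSup ((fun a => Metric.infDist a S) '' A)

/-- A set is polyhedral if it is the intersection of finitely many closed halfspaces. -/
def IsPolyhedral {E : Type*} [NormedAddCommGroup E] [InnerProductSpace ℝ E]
    (S : Set E) : Prop :=
  ∃ (k : ℕ) (v : Fin k → E) (b : Fin k → ℝ), S = {x | ∀ i, (inner ℝ (v i) x : ℝ) ≤ b i}

section Stmt19Aux

open Finset
open scoped RealInnerProductSpace

variable {E : Type*} [NormedAddCommGroup E] [InnerProductSpace ℝ E]

/-- Lower bound on `c * infDist`. -/
lemma le_mul_infDist {α : Type*} [MetricSpace α] {s : Set α} (hs : s.Nonempty) {c A : ℝ}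
    (hc : 0 ≤ c) (x : α) (h : ∀ z ∈ s, A ≤ c * dist x z) : A ≤ c * Metric.infDist x s := by
  rcases hc.eq_or_lt with hc0 | hc0
  · obtain ⟨z, hz⟩ := hs
    have := h z hz
    simpa [← hc0] using this
  · by_contra hlt
    push_neg at hlt
    have h2 : Metric.infDist x s < A / c := by
      rw [lt_div_iff₀ hc0]; linarith [hlt]
    obtain ⟨z, hz, hdz⟩ := (Metric.infDist_lt_iff hs).mp h2
    have h3 := h z hz
    have h4 : c * dist x z < c * (A / c) := mul_lt_mul_of_pos_left hdz hc0
    rw [mul_div_cancel₀ _ (ne_of_gt hc0)] at h4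
    linarith

/-- Projection onto a nonempty closed convex set, with variational characterization. -/
lemma exists_proj [CompleteSpace E] {K : Set E} (hne : K.Nonempty) (hcl : IsClosed K)
    (hcv : Convex ℝ K) (x : E) :
    ∃ p ∈ K, Metric.infDist x K = ‖x - p‖ ∧ ∀ z ∈ K, ⟪x - p, z - p⟫ ≤ 0 := by
  obtain ⟨p, hpK, hp⟩ := exists_norm_eq_iInf_of_complete_convex hne hcl.isComplete hcv x
  refine ⟨p, hpK, ?_, (norm_eq_iInf_iff_real_inner_le_zero hcv hpK).mp hp⟩
  rw [Metric.infDist_eq_iInf, hp]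
  congr 1
  ext w
  rw [dist_eq_norm]

/-- Conic Carathéodory: a nonnegative combination can be rewritten as a nonnegative
combination over a linearly independent subfamily. -/
lemma conic_caratheodory {ι : Type*} [Fintype ι] (a : ι → E) (s : Finset ι) :
    ∀ lam : ι → ℝ, (∀ i, 0 ≤ lam i) →
    ∃ (t : Finset ι) (mu : ι → ℝ), t ⊆ s ∧ LinearIndependent ℝ (fun i : t => a i) ∧
      (∀ i, 0 ≤ mu i) ∧ ∑ i ∈ t, mu i • a i = ∑ i ∈ s, lam i • a i := by
  classical
  induction s using Finset.strongInduction with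
  | _ s ih =>
    intro lam hlam
    by_cases hind : LinearIndependent ℝ (fun i : s => a i)
    · exact ⟨s, lam, subset_rfl, hind, hlam, rfl⟩
    · rw [Fintype.not_linearIndependent_iff] at hind
      obtain ⟨g, hg0, i₀, hgi₀⟩ := hind
      set ext : ι → ℝ := fun i => if h : i ∈ s then g ⟨i, h⟩ else 0 with hext
      have hextsum : ∑ i ∈ s, ext i • a i = 0 := by
        rw [← Finset.sum_coe_sort s (fun i => ext i • a i)]
        rw [← hg0]
        refine Finset.sum_congr rfl fun i _ => ?_
        simp [hext, i.2]
      have hextsupp : ∀ i ∉ s, ext i = 0 := fun i hi => by simp [hext, hi]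
      have key : ∃ ν : ι → ℝ, (∑ i ∈ s, ν i • a i = 0) ∧ (∃ i ∈ s, 0 < ν i) := by
        rcases em (∃ i ∈ s, 0 < ext i) with h | h
        · exact ⟨ext, hextsum, h⟩
        · refine ⟨-ext, by simp [hextsum], ⟨i₀, i₀.2, ?_⟩⟩
          push_neg at h
          have h1 : ext (i₀ : ι) = g i₀ := by simp [hext, i₀.2]
          have h2 : ext (i₀ : ι) ≤ 0 := h _ i₀.2
          have h3 : ext (i₀ : ι) ≠ 0 := by rw [h1]; exact hgi₀
          simp only [Pi.neg_apply]
          cases lt_or_eq_of_le h2 with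
          | inl h4 => linarith
          | inr h4 => exact absurd h4 h3
      obtain ⟨ν, hνsum, i₁, hi₁s, hi₁pos⟩ := key
      set F := s.filter (fun i => 0 < ν i) with hF
      have hFne : F.Nonempty := ⟨i₁, Finset.mem_filter.mpr ⟨hi₁s, hi₁pos⟩⟩
      obtain ⟨j, hjF, hjmin⟩ := Finset.exists_min_image F (fun i => lam i / ν i) hFne
      have hjs : j ∈ s := (Finset.mem_filter.mp hjF).1
      have hνj : 0 < ν j := (Finset.mem_filter.mp hjF).2
      set r := lam j / ν j with hr
      have hr0 : 0 ≤ r := div_nonneg (hlam j) hνj.le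
      set lam' : ι → ℝ := fun i => if i ∈ s then lam i - r * ν i else 0 with hlam'
      have h0' : ∀ i, 0 ≤ lam' i := by
        intro i
        simp only [hlam']
        split_ifs with hi
        · by_cases hνi : 0 < ν i
          · have hiF : i ∈ F := Finset.mem_filter.mpr ⟨hi, hνi⟩
            have := hjmin i hiF
            have : r * ν i ≤ lam i := by
              rw [hr]
              exact (le_div_iff₀ hνi).mp this
            linarith
          · push_neg at hνi
            have : r * ν i ≤ 0 := mul_nonpos_of_nonneg_of_nonpos hr0 hνi
            linarith [hlam i]
        · exact le_rfl
      have hj0 : lam' j = 0 := by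
        simp only [hlam', if_pos hjs, hr]
        field_simp
        ring
      have hsum' : ∑ i ∈ s.erase j, lam' i • a i = ∑ i ∈ s, lam i • a i := by
        rw [Finset.sum_erase_eq_sub hjs, hj0, zero_smul, sub_zero]
        have : ∑ i ∈ s, lam' i • a i
            = ∑ i ∈ s, (lam i • a i - r • (ν i • a i)) := by
          refine Finset.sum_congr rfl fun i hi => ?_
          simp only [hlam', if_pos hi, sub_smul, smul_smul]
        rw [this, Finset.sum_sub_distrib, ← Finset.smul_sum, hνsum, smul_zero, sub_zero]
      obtain ⟨t, mu, hts, hind', hmu, heq⟩ :=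
        ih (s.erase j) (Finset.erase_ssubset hjs) lam' h0'
      exact ⟨t, mu, hts.trans (Finset.erase_subset _ _), hind', hmu, heq.trans hsum'⟩

variable [FiniteDimensional ℝ E]

/-- The summation map associated with a finite subfamily, as a linear map. -/
noncomputable def sumMap {ι : Type*} (a : ι → E) (t : Finset ι) : (↥t → ℝ) →ₗ[ℝ] E where
  toFun f := ∑ i : t, f i • a (i : ι)
  map_add' f g := by simp [add_smul, Finset.sum_add_distrib]
  map_smul' r f := by simp [Finset.smul_sum, smul_smul]

lemma sumMap_injective {ι : Type*} (a : ι → E) (t : Finset ι)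
    (hli : LinearIndependent ℝ (fun i : t => a i)) : LinearMap.ker (sumMap a t) = ⊥ := by
  rw [LinearMap.ker_eq_bot']
  intro f hf
  funext i
  exact Fintype.linearIndependent_iff.mp hli f hf i

lemma indep_sum_abs_le {ι : Type*} [Fintype ι] (a : ι → E) (t : Finset ι) :
    ∃ c : ℝ, 0 ≤ c ∧ (LinearIndependent ℝ (fun i : t => a i) →
      ∀ mu : ι → ℝ, ∑ i ∈ t, |mu i| ≤ c * ‖∑ i ∈ t, mu i • a i‖) := by
  classical
  by_cases hli : LinearIndependent ℝ (fun i : t => a i)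
  · set L := sumMap a t with hL
    have hker := sumMap_injective a t hli
    have hinj : Function.Injective L := LinearMap.ker_eq_bot.mp hker
    set e := LinearEquiv.ofInjective L hinj with he
    set G := LinearMap.toContinuousLinearMap (e.symm : LinearMap.range L →ₗ[ℝ] (↥t → ℝ))
    refine ⟨(t.card : ℝ) * ‖G‖ , by positivity, fun _ mu => ?_⟩
    set f : ↥t → ℝ := fun i => mu (i : ι) with hf
    have hLf : L f = ∑ i ∈ t, mu i • a i := by
      simp only [hL, sumMap, LinearMap.coe_mk, AddHom.coe_mk, hf]
      exact Finset.sum_coe_sort t (fun i => mu i • a i)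
    have hfe : e.symm (e f) = f := e.symm_apply_apply f
    have hnorm : ‖f‖ ≤ ‖G‖ * ‖L f‖ := by
      have h1 : ‖G (e f)‖ ≤ ‖G‖ * ‖e f‖ := G.le_opNorm (e f)
      have h2 : G (e f) = f := by
        simp only [G, LinearMap.coe_toContinuousLinearMap']
        exact hfe
      have h3 : ‖e f‖ = ‖L f‖ := by
        have : ((e f : LinearMap.range L) : E) = L f := by
          simp [he, LinearEquiv.ofInjective_apply]
        rw [← this]
        rfl
      rw [h2, h3] at h1
      exact h1
    have hsum : ∑ i ∈ t, |mu i| = ∑ i : t, |f i| := (Finset.sum_coe_sort t (fun i => |mu i|)).symm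
    have hbd : ∑ i : t, |f i| ≤ (t.card : ℝ) * ‖f‖ := by
      calc ∑ i : t, |f i| ≤ ∑ _i : t, ‖f‖ := by
            refine Finset.sum_le_sum fun i _ => ?_
            have := norm_le_pi_norm f i
            simpa [Real.norm_eq_abs] using this
        _ = (t.card : ℝ) * ‖f‖ := by
            simp [Finset.card_univ, Fintype.card_coe, mul_comm]
    calc ∑ i ∈ t, |mu i| = ∑ i : t, |f i| := hsum
      _ ≤ (t.card : ℝ) * ‖f‖ := hbd
      _ ≤ (t.card : ℝ) * (‖G‖ * ‖L f‖) := by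
          apply mul_le_mul_of_nonneg_left hnorm (by positivity)
      _ = (t.card : ℝ) * ‖G‖ * ‖∑ i ∈ t, mu i • a i‖ := by rw [hLf]; ring
  · exact ⟨0, le_rfl, fun h => absurd h hli⟩

/-- A uniform constant over all linearly independent subfamilies. -/
lemma exists_unif_const {ι : Type*} [Fintype ι] (a : ι → E) :
    ∃ c : ℝ, 0 < c ∧ ∀ t : Finset ι, LinearIndependent ℝ (fun i : t => a i) →
      ∀ mu : ι → ℝ, ∑ i ∈ t, |mu i| ≤ c * ‖∑ i ∈ t, mu i • a i‖ := by
  classical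
  choose f hf0 hf using fun t : Finset ι => indep_sum_abs_le a t
  refine ⟨1 + ∑ t : Finset ι, f t, ?_, fun t hli mu => ?_⟩
  · have : 0 ≤ ∑ t : Finset ι, f t := Finset.sum_nonneg fun t _ => hf0 t
    linarith
  · have h1 := hf t hli mu
    have h2 : f t ≤ 1 + ∑ u : Finset ι, f u := by
      have := Finset.single_le_sum (fun u (_ : u ∈ Finset.univ) => hf0 u) (Finset.mem_univ t)
      linarith
    calc ∑ i ∈ t, |mu i| ≤ f t * ‖∑ i ∈ t, mu i • a i‖ := h1
      _ ≤ (1 + ∑ u : Finset ι, f u) * ‖∑ i ∈ t, mu i • a i‖ :=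
          mul_le_mul_of_nonneg_right h2 (norm_nonneg _)

/-- The finitely generated cone over `{a i : i ∈ I}` is closed. -/
lemma fg_cone_closed {ι : Type*} [Fintype ι] (a : ι → E) (I : Finset ι) :
    IsClosed {w : E | ∃ lam : ι → ℝ, (∀ i, 0 ≤ lam i) ∧ w = ∑ i ∈ I, lam i • a i} := by
  classical
  have hrep : {w : E | ∃ lam : ι → ℝ, (∀ i, 0 ≤ lam i) ∧ w = ∑ i ∈ I, lam i • a i}
      = ⋃ (t : Finset ι), ⋃ (_ : t ⊆ I ∧ LinearIndependent ℝ (fun i : t => a i)),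
          (sumMap a t) '' {f : ↥t → ℝ | ∀ i, 0 ≤ f i} := by
    ext w
    simp only [Set.mem_setOf_eq, Set.mem_iUnion, Set.mem_image]
    constructor
    · rintro ⟨lam, hlam, rfl⟩
      obtain ⟨t, mu, htI, hli, hmu, heq⟩ := conic_caratheodory a I lam hlam
      refine ⟨t, ⟨htI, hli⟩, fun i => mu (i : ι), fun i => hmu _, ?_⟩
      show ∑ i : t, mu (i : ι) • a (i : ι) = _
      rw [Finset.sum_coe_sort t (fun i => mu i • a i)]
      exact heq
    · rintro ⟨t, ⟨htI, _⟩, f, hf, rfl⟩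
      set lam : ι → ℝ := fun i => if h : i ∈ t then f ⟨i, h⟩ else 0 with hlamdef
      refine ⟨lam, ?_, ?_⟩
      · intro i
        simp only [hlamdef]
        split_ifs with h
        · exact hf _
        · exact le_rfl
      · have h1 : ∑ i ∈ I, lam i • a i = ∑ i ∈ t, lam i • a i :=
          (Finset.sum_subset htI (fun i _ hit => by simp [hlamdef, dif_neg hit])).symm
        have h2 : ∑ i ∈ t, lam i • a i = ∑ i ∈ t.attach, lam (↑i) • a ↑i :=
          (Finset.sum_attach t (fun i => lam i • a i)).symm
        have h3 : ∑ i ∈ t.attach, lam (↑i) • a ↑i = ∑ i : t, f i • a (i : ι) := by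
          rw [← Finset.univ_eq_attach]
          refine Finset.sum_congr rfl fun i _ => ?_
          simp [hlamdef, dif_pos i.2]
        show (∑ i : t, f i • a (i : ι)) = _
        rw [h1, h2, h3]
  rw [hrep]
  refine isClosed_iUnion_of_finite fun t => isClosed_iUnion_of_finite ?_
  rintro ⟨htI, hli⟩
  have hce := LinearMap.isClosedEmbedding_of_injective (sumMap_injective a t hli)
  refine hce.isClosedMap _ ?_
  have : {f : ↥t → ℝ | ∀ i, 0 ≤ f i} = ⋂ i : ↥t, {f : ↥t → ℝ | 0 ≤ f i} := by
    ext f; simp [Set.mem_iInter]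
  rw [this]
  exact isClosed_iInter fun i => isClosed_le continuous_const (continuous_apply i)

/-- Normal vectors to a polyhedron at a point are nonnegative combinations of the
active constraint normals. -/
lemma normal_cone_repr {ι : Type*} [Fintype ι] (a : ι → E) (b : ι → ℝ) {p v : E}
    (hp : ∀ i, ⟪a i, p⟫ ≤ b i)
    (hv : ∀ z, (∀ i, ⟪a i, z⟫ ≤ b i) → ⟪v, z - p⟫ ≤ 0) :
    ∃ lam : ι → ℝ, (∀ i, 0 ≤ lam i) ∧ (∀ i, lam i ≠ 0 → ⟪a i, p⟫ = b i) ∧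
      v = ∑ i, lam i • a i := by
  classical
  set I : Finset ι := Finset.univ.filter (fun i => ⟪a i, p⟫ = b i) with hI
  set K : Set E := {w : E | ∃ lam : ι → ℝ, (∀ i, 0 ≤ lam i) ∧ w = ∑ i ∈ I, lam i • a i} with hK
  have hK0 : (0 : E) ∈ K := ⟨0, fun i => le_rfl, by simp⟩
  have hKcv : Convex ℝ K := by
    rintro w1 ⟨l1, hl1, rfl⟩ w2 ⟨l2, hl2, rfl⟩ s t hs ht _
    refine ⟨fun i => s * l1 i + t * l2 i,
      fun i => add_nonneg (mul_nonneg hs (hl1 i)) (mul_nonneg ht (hl2 i)), ?_⟩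
    rw [Finset.smul_sum, Finset.smul_sum, ← Finset.sum_add_distrib]
    refine Finset.sum_congr rfl fun i _ => ?_
    simp [add_smul, smul_smul]
  have hKcl : IsClosed K := fg_cone_closed a I
  by_cases hvK : v ∈ K
  · obtain ⟨lam, h0, hrep⟩ := hvK
    refine ⟨fun i => if i ∈ I then lam i else 0, fun i => ?_, fun i hi => ?_, ?_⟩
    · dsimp only
      split_ifs with h
      · exact h0 i
      · exact le_rfl
    · by_cases h : i ∈ I
      · exact (Finset.mem_filter.mp h).2
      · simp [h] at hi
    · rw [hrep]
      rw [← Finset.sum_subset (Finset.subset_univ I)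
        (fun i _ hiI => by simp [if_neg hiI])]
      exact Finset.sum_congr rfl fun i hi => by simp [if_pos hi]
  · exfalso
    obtain ⟨f, u, hfv, hfK⟩ := geometric_hahn_banach_point_closed hKcv hKcl hvK
    have hu0 : u < 0 := by
      have := hfK 0 hK0
      simpa using this
    have hfa : ∀ i ∈ I, 0 ≤ f (a i) := by
      intro i hi
      by_contra hneg
      push_neg at hneg
      have htpos : 0 < u / f (a i) := div_pos_of_neg_of_neg hu0 hneg
      have hmem : (u / f (a i)) • a i ∈ K := by
        refine ⟨fun j => if j = i then u / f (a i) else 0, fun j => ?_, ?_⟩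
        · dsimp only
          split_ifs
          · exact htpos.le
          · exact le_rfl
        · refine Eq.symm ?_
          dsimp only
          simp only [ite_smul, zero_smul]
          rw [Finset.sum_ite_eq' I i (fun j => (u / f (a i)) • a j), if_pos hi]
      have := hfK _ hmem
      rw [map_smul, smul_eq_mul, div_mul_cancel₀ _ (ne_of_lt hneg)] at this
      exact lt_irrefl u this
    set y := (InnerProductSpace.toDual ℝ E).symm f with hy
    have hyw : ∀ w, ⟪y, w⟫ = f w := fun w => InnerProductSpace.toDual_symm_apply
    set d := -y with hd
    have hdi : ∀ i ∈ I, ⟪a i, d⟫ ≤ 0 := by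
      intro i hi
      rw [hd, inner_neg_right, real_inner_comm, hyw]
      simpa using hfa i hi
    have hvd : 0 < ⟪v, d⟫ := by
      rw [hd, inner_neg_right, real_inner_comm, hyw]
      linarith
    set M : ℝ := 1 + ∑ i, |⟪a i, d⟫| with hM
    have hMpos : 0 < M := by
      have : (0:ℝ) ≤ ∑ i, |⟪a i, d⟫| := Finset.sum_nonneg fun i _ => abs_nonneg _
      simp only [hM]; linarith
    have hMi : ∀ i, ⟪a i, d⟫ ≤ M := by
      intro i
      have h1 : |⟪a i, d⟫| ≤ ∑ j, |⟪a j, d⟫| :=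
        Finset.single_le_sum (f := fun j => |⟪a j, d⟫|)
          (fun j _ => abs_nonneg _) (Finset.mem_univ i)
      have := le_abs_self ⟪a i, d⟫
      simp only [hM]; linarith
    set J : Finset ι := Finset.univ.filter (fun i => i ∉ I) with hJ
    set sm : ℝ := if hJne : J.Nonempty then J.inf' hJne (fun i => b i - ⟪a i, p⟫) else 1
      with hsm
    have hslack : ∀ i ∉ I, ⟪a i, p⟫ < b i := by
      intro i hiI
      refine lt_of_le_of_ne (hp i) ?_
      intro heq
      exact hiI (Finset.mem_filter.mpr ⟨Finset.mem_univ i, heq⟩)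
    have hsmpos : 0 < sm := by
      rw [hsm]
      split_ifs with hJne
      · rw [Finset.lt_inf'_iff]
        intro i hiJ
        have : i ∉ I := (Finset.mem_filter.mp hiJ).2
        linarith [hslack i this]
      · exact one_pos
    have hsmle : ∀ i ∉ I, sm ≤ b i - ⟪a i, p⟫ := by
      intro i hiI
      have hiJ : i ∈ J := Finset.mem_filter.mpr ⟨Finset.mem_univ i, hiI⟩
      rw [hsm, dif_pos ⟨i, hiJ⟩]
      exact Finset.inf'_le _ hiJ
    set tl : ℝ := sm / M with htl
    have htlpos : 0 < tl := div_pos hsmpos hMpos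
    have hz : ∀ i, ⟪a i, p + tl • d⟫ ≤ b i := by
      intro i
      rw [inner_add_right, real_inner_smul_right]
      by_cases hi : i ∈ I
      · have h1 : ⟪a i, p⟫ = b i := (Finset.mem_filter.mp hi).2
        have h2 : tl * ⟪a i, d⟫ ≤ 0 :=
          mul_nonpos_of_nonneg_of_nonpos htlpos.le (hdi i hi)
        linarith
      · have h1 : tl * ⟪a i, d⟫ ≤ tl * M := mul_le_mul_of_nonneg_left (hMi i) htlpos.le
        have h2 : tl * M = sm := by
          rw [htl, div_mul_cancel₀ _ (ne_of_gt hMpos)]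
        have h3 := hsmle i hi
        linarith
    have hcontr := hv _ hz
    rw [add_sub_cancel_left, real_inner_smul_right] at hcontr
    nlinarith

/-- Hoffman's error bound for polyhedra. -/
theorem hoffman {ι : Type*} [Fintype ι] (a : ι → E) (b : ι → ℝ)
    (hne : {x : E | ∀ i, ⟪a i, x⟫ ≤ b i}.Nonempty) :
    ∃ τ : ℝ, 0 < τ ∧ ∀ x : E,
      Metric.infDist x {x : E | ∀ i, ⟪a i, x⟫ ≤ b i} ≤ τ * ∑ i, max (⟪a i, x⟫ - b i) 0 := by
  classical
  set P : Set E := {x : E | ∀ i, ⟪a i, x⟫ ≤ b i} with hP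
  have hPcl : IsClosed P := by
    have : P = ⋂ i, {x : E | ⟪a i, x⟫ ≤ b i} := by ext x; simp [hP, Set.mem_iInter]
    rw [this]
    exact isClosed_iInter fun i =>
      isClosed_le (continuous_const.inner continuous_id) continuous_const
  have hPcv : Convex ℝ P := by
    have : P = ⋂ i, {x : E | ⟪a i, x⟫ ≤ b i} := by ext x; simp [hP, Set.mem_iInter]
    rw [this]
    refine convex_iInter fun i => ?_
    exact convex_halfSpace_le ⟨fun x y => inner_add_right _ _ _,
      fun c x => real_inner_smul_right _ _ _⟩ (b i)
  obtain ⟨c, hc, hcbound⟩ := exists_unif_const a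
  refine ⟨c, hc, fun x => ?_⟩
  have hRnn : (0:ℝ) ≤ ∑ i, max (⟪a i, x⟫ - b i) 0 :=
    Finset.sum_nonneg fun i _ => le_max_right _ _
  obtain ⟨p, hpP, hdist, hproj⟩ := exists_proj hne hPcl hPcv x
  set v := x - p with hvdef
  have hvnormal : ∀ z, (∀ i, ⟪a i, z⟫ ≤ b i) → ⟪v, z - p⟫ ≤ 0 := fun z hz => hproj z hz
  obtain ⟨lam, hlam0, hlamact, hlamrep⟩ := normal_cone_repr a b hpP hvnormal
  -- restrict the sum to the active set
  set I : Finset ι := Finset.univ.filter (fun i => ⟪a i, p⟫ = b i) with hI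
  have hrepI : v = ∑ i ∈ I, lam i • a i := by
    rw [hlamrep]
    refine (Finset.sum_subset (Finset.subset_univ I) fun i _ hiI => ?_).symm
    have : lam i = 0 := by
      by_contra hne0
      exact hiI (Finset.mem_filter.mpr ⟨Finset.mem_univ i, hlamact i hne0⟩)
    simp [this]
  obtain ⟨t, mu, htI, hli, hmu0, hmurep⟩ := conic_caratheodory a I lam hlam0
  have hrep : v = ∑ i ∈ t, mu i • a i := by rw [hrepI, ← hmurep]
  -- main estimate
  have hmu_le : ∀ i ∈ t, mu i ≤ c * ‖v‖ := by
    intro i hi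
    have h1 : mu i ≤ ∑ j ∈ t, |mu j| := by
      have : |mu i| ≤ ∑ j ∈ t, |mu j| :=
        Finset.single_le_sum (f := fun j => |mu j|) (fun j _ => abs_nonneg _) hi
      calc mu i ≤ |mu i| := le_abs_self _
        _ ≤ _ := this
    have h2 := hcbound t hli mu
    rw [← hrep] at h2
    linarith
  have hkey : ‖v‖ ^ 2 ≤ c * ‖v‖ * ∑ i, max (⟪a i, x⟫ - b i) 0 := by
    have hexp : ‖v‖ ^ 2 = ∑ i ∈ t, mu i * ⟪a i, v⟫ := by
      rw [← real_inner_self_eq_norm_sq]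
      nth_rewrite 1 [hrep]
      rw [sum_inner]
      exact Finset.sum_congr rfl fun i _ => real_inner_smul_left _ _ _
    have hterm : ∀ i ∈ t, mu i * ⟪a i, v⟫ ≤ (c * ‖v‖) * max (⟪a i, x⟫ - b i) 0 := by
      intro i hi
      have hacti : ⟪a i, p⟫ = b i := (Finset.mem_filter.mp (htI hi)).2
      have hav : ⟪a i, v⟫ = ⟪a i, x⟫ - b i := by
        rw [hvdef, inner_sub_right, hacti]
      have hle : ⟪a i, v⟫ ≤ max (⟪a i, x⟫ - b i) 0 := by
        rw [hav]; exact le_max_left _ _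
      by_cases hsign : 0 ≤ ⟪a i, v⟫
      · calc mu i * ⟪a i, v⟫ ≤ mu i * max (⟪a i, x⟫ - b i) 0 :=
              mul_le_mul_of_nonneg_left hle (hmu0 i)
          _ ≤ (c * ‖v‖) * max (⟪a i, x⟫ - b i) 0 :=
              mul_le_mul_of_nonneg_right (hmu_le i hi) (le_max_right _ _)
      · push_neg at hsign
        have h1 : mu i * ⟪a i, v⟫ ≤ 0 := mul_nonpos_of_nonneg_of_nonpos (hmu0 i) hsign.le
        have h2 : (0:ℝ) ≤ (c * ‖v‖) * max (⟪a i, x⟫ - b i) 0 :=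
          mul_nonneg (mul_nonneg hc.le (norm_nonneg _)) (le_max_right _ _)
        linarith
    calc ‖v‖ ^ 2 = ∑ i ∈ t, mu i * ⟪a i, v⟫ := hexp
      _ ≤ ∑ i ∈ t, (c * ‖v‖) * max (⟪a i, x⟫ - b i) 0 := Finset.sum_le_sum hterm
      _ = (c * ‖v‖) * ∑ i ∈ t, max (⟪a i, x⟫ - b i) 0 := by rw [Finset.mul_sum]
      _ ≤ (c * ‖v‖) * ∑ i, max (⟪a i, x⟫ - b i) 0 := by
          refine mul_le_mul_of_nonneg_left ?_ (mul_nonneg hc.le (norm_nonneg _))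
          refine Finset.sum_le_sum_of_subset_of_nonneg (Finset.subset_univ t)
            fun i _ _ => le_max_right _ _
  rw [hdist]
  by_cases hv0 : ‖v‖ = 0
  · rw [hv0]
    positivity
  · have hvpos : 0 < ‖v‖ := lt_of_le_of_ne (norm_nonneg _) (Ne.symm hv0)
    nlinarith [hkey]

/-- The evaluation map `A ↦ A x` as a linear map on matrices. -/
noncomputable def evx {m n : ℕ} (x : EuclideanSpace ℝ (Fin n)) :
    Matrix (Fin m) (Fin n) ℝ →ₗ[ℝ] EuclideanSpace ℝ (Fin m) where
  toFun A := Matrix.toEuclideanLin A x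
  map_add' A B := by simp [map_add]
  map_smul' r A := by simp [map_smul]


end Stmt19Aux

open scoped RealInnerProductSpace in
theorem stmt19 {m n : ℕ} (U : Set (Matrix (Fin m) (Fin n) ℝ))
    (hUne : U.Nonempty) (hUcomp : IsCompact U) (hUcv : Convex ℝ U)
    (C : Set (EuclideanSpace ℝ (Fin n)))
    (hCne : C.Nonempty) (hCcl : IsClosed C) (hCcv : Convex ℝ C)
    (Q : Set (EuclideanSpace ℝ (Fin m)))
    (hQcl : IsClosed Q) (hQcv : Convex ℝ Q)
    (hQcone : ∀ t : ℝ, 0 < t → t • Q ⊆ Q)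
    (hQpointed : Q ∩ (-Q) = {0})
    (hQne0 : Q ≠ {0}) (hQneuniv : Q ≠ Set.univ)
    -- (i) polyhedrality of the data
    (hCpoly : IsPolyhedral C) (hQpoly : IsPolyhedral Q)
    (k : ℕ) (Amats : Fin k → Matrix (Fin m) (Fin n) ℝ)
    (hUhull : U = convexHull ℝ (Set.range Amats))
    -- (ii) uniform covering
    (σ : ℝ) (hσ : 0 < σ)
    (hcov : ∀ A ∈ U,
      Metric.closedBall (0 : EuclideanSpace ℝ (Fin m)) σ ⊆
        Matrix.toEuclideanLin A '' Metric.closedBall (0 : EuclideanSpace ℝ (Fin n)) 1)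
    -- (iii) nonempty interior of the intersection of the inverse images
    (hint : (interior (⋂ A ∈ U, (fun x => Matrix.toEuclideanLin A x) ⁻¹' Q)).Nonempty)
    (hSolv : {x | x ∈ C ∧ AU U x ⊆ Q}.Nonempty) :
    ∃ τ : ℝ, 0 < τ ∧ ∀ x : EuclideanSpace ℝ (Fin n),
      Metric.infDist x {x | x ∈ C ∧ AU U x ⊆ Q}
        ≤ τ * (exc (AU U x) Q + Metric.infDist x C) := by
  classical
  obtain ⟨k1, u, c, hC⟩ := hCpoly
  obtain ⟨k2, vv, bb, hQ⟩ := hQpoly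
  have hQ0 : (0 : EuclideanSpace ℝ (Fin m)) ∈ Q := by
    have h0 : (0 : EuclideanSpace ℝ (Fin m)) ∈ Q ∩ (-Q) := by
      rw [hQpointed]; exact Set.mem_singleton 0
    exact h0.1
  have hQne : Q.Nonempty := ⟨0, hQ0⟩
  have hAmem : ∀ i, Amats i ∈ U := fun i =>
    hUhull ▸ subset_convexHull ℝ _ (Set.mem_range_self i)
  -- the combined constraint system
  set a : (Fin k1 ⊕ Fin k × Fin k2) → EuclideanSpace ℝ (Fin n) :=
    Sum.elim u (fun p => (LinearMap.adjoint (Matrix.toEuclideanLin (Amats p.1))) (vv p.2))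
    with ha
  set bv : (Fin k1 ⊕ Fin k × Fin k2) → ℝ := Sum.elim c (fun p => bb p.2) with hbv
  have hinner : ∀ (i : Fin k) (j : Fin k2) (x : EuclideanSpace ℝ (Fin n)),
      ⟪a (Sum.inr (i, j)), x⟫ = ⟪vv j, Matrix.toEuclideanLin (Amats i) x⟫ := by
    intro i j x
    simp only [ha, Sum.elim_inr]
    exact LinearMap.adjoint_inner_left _ _ _
  -- identification of the solution set with the polyhedron
  have hSeq : {x | x ∈ C ∧ AU U x ⊆ Q}
      = {x : EuclideanSpace ℝ (Fin n) | ∀ i, ⟪a i, x⟫ ≤ bv i} := by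
    ext x
    simp only [Set.mem_setOf_eq]
    constructor
    · rintro ⟨hxC, hxQ⟩ i
      cases i with
      | inl l =>
        rw [hC] at hxC
        simpa [ha, hbv] using hxC l
      | inr p =>
        obtain ⟨i, j⟩ := p
        have hmem : Matrix.toEuclideanLin (Amats i) x ∈ Q :=
          hxQ ⟨Amats i, hAmem i, rfl⟩
        rw [hQ] at hmem
        have := hmem j
        rw [hinner i j x]
        simpa [hbv] using this
    · intro hx
      have hxC : x ∈ C := by
        rw [hC]
        intro l
        simpa [ha, hbv] using hx (Sum.inl l)
      refine ⟨hxC, ?_⟩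
      rintro y ⟨A, hA, rfl⟩
      have hDcv : Convex ℝ ((evx (m := m) x) ⁻¹' Q) := hQcv.linear_preimage (evx x)
      have hrange : Set.range Amats ⊆ (evx (m := m) x) ⁻¹' Q := by
        rintro B ⟨i, rfl⟩
        show Matrix.toEuclideanLin (Amats i) x ∈ Q
        rw [hQ]
        intro j
        rw [← hinner i j x]
        simpa [hbv] using hx (Sum.inr (i, j))
      have hsub : U ⊆ (evx (m := m) x) ⁻¹' Q := by
        rw [hUhull]
        exact convexHull_min hrange hDcv
      exact hsub hA
  have hPne : {x : EuclideanSpace ℝ (Fin n) | ∀ i, ⟪a i, x⟫ ≤ bv i}.Nonempty := by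
    rw [← hSeq]; exact hSolv
  obtain ⟨τ₀, hτ₀, hhoff⟩ := hoffman a bv hPne
  -- constants
  set CU : ℝ := ∑ l, ‖u l‖ with hCU
  set CV : ℝ := ∑ p : Fin k × Fin k2, ‖vv p.2‖ with hCV
  have hCU0 : 0 ≤ CU := Finset.sum_nonneg fun l _ => norm_nonneg _
  have hCV0 : 0 ≤ CV := Finset.sum_nonneg fun p _ => norm_nonneg _
  set B : ℝ := CU + CV + 1 with hB
  have hBpos : 0 < B := by simp only [hB]; linarith
  refine ⟨τ₀ * B, mul_pos hτ₀ hBpos, fun x => ?_⟩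
  -- facts about exc
  have hAUx : AU U x = (fun A => Matrix.toEuclideanLin A x) '' U := rfl
  have hcont : Continuous (fun A : Matrix (Fin m) (Fin n) ℝ =>
      Metric.infDist (Matrix.toEuclideanLin A x) Q) := by
    have h1 : Continuous (fun A : Matrix (Fin m) (Fin n) ℝ => Matrix.toEuclideanLin A x) :=
      (evx (m := m) x).continuous_of_finiteDimensional
    exact (continuous_infDist_pt Q).comp h1
  have hbdd : BddAbove ((fun a => Metric.infDist a Q) '' AU U x) := by
    rw [hAUx, Set.image_image]
    exact (hUcomp.image hcont).bddAbove
  have hexcmem : ∀ A ∈ U, Metric.infDist (Matrix.toEuclideanLin A x) Q ≤ exc (AU U x) Q := by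
    intro A hA
    exact le_csSup hbdd ⟨Matrix.toEuclideanLin A x, ⟨A, hA, rfl⟩, rfl⟩
  have hexc0 : 0 ≤ exc (AU U x) Q := by
    obtain ⟨A₀, hA₀⟩ := hUne
    exact le_trans Metric.infDist_nonneg (hexcmem A₀ hA₀)
  have hdC0 : 0 ≤ Metric.infDist x C := Metric.infDist_nonneg
  -- residual bounds
  have hres1 : ∀ l : Fin k1, max (⟪a (Sum.inl l), x⟫ - bv (Sum.inl l)) 0
      ≤ ‖u l‖ * Metric.infDist x C := by
    intro l
    refine max_le ?_ (mul_nonneg (norm_nonneg _) hdC0)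
    simp only [ha, hbv, Sum.elim_inl]
    refine le_mul_infDist hCne (norm_nonneg _) x fun z hz => ?_
    have hz' : ⟪u l, z⟫ ≤ c l := by rw [hC] at hz; exact hz l
    have h1 : ⟪u l, x⟫ - c l ≤ ⟪u l, x - z⟫ := by
      rw [inner_sub_right]; linarith
    have h2 : ⟪u l, x - z⟫ ≤ ‖u l‖ * ‖x - z‖ := real_inner_le_norm _ _
    rw [dist_eq_norm]
    linarith
  have hres2 : ∀ p : Fin k × Fin k2, max (⟪a (Sum.inr p), x⟫ - bv (Sum.inr p)) 0
      ≤ ‖vv p.2‖ * exc (AU U x) Q := by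
    rintro ⟨i, j⟩
    refine max_le ?_ (mul_nonneg (norm_nonneg _) hexc0)
    have hstep : ⟪a (Sum.inr (i, j)), x⟫ - bv (Sum.inr (i, j))
        ≤ ‖vv j‖ * Metric.infDist (Matrix.toEuclideanLin (Amats i) x) Q := by
      refine le_mul_infDist hQne (norm_nonneg _) _ fun z hz => ?_
      have hz' : ⟪vv j, z⟫ ≤ bb j := by rw [hQ] at hz; exact hz j
      have h1 : ⟪vv j, Matrix.toEuclideanLin (Amats i) x⟫ - bb j
          ≤ ⟪vv j, Matrix.toEuclideanLin (Amats i) x - z⟫ := by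
        rw [inner_sub_right]; linarith
      have h2 := real_inner_le_norm (vv j) (Matrix.toEuclideanLin (Amats i) x - z)
      rw [dist_eq_norm, hinner i j x]
      simp only [hbv, Sum.elim_inr]
      linarith
    refine hstep.trans ?_
    exact mul_le_mul_of_nonneg_left (hexcmem _ (hAmem i)) (norm_nonneg _)
  -- put everything together
  have hsum : ∑ i, max (⟪a i, x⟫ - bv i) 0
      ≤ CU * Metric.infDist x C + CV * exc (AU U x) Q := by
    rw [Fintype.sum_sum_type]
    have h1 : ∑ l, max (⟪a (Sum.inl l), x⟫ - bv (Sum.inl l)) 0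
        ≤ ∑ l, ‖u l‖ * Metric.infDist x C := Finset.sum_le_sum fun l _ => hres1 l
    have h2 : ∑ p : Fin k × Fin k2, max (⟪a (Sum.inr p), x⟫ - bv (Sum.inr p)) 0
        ≤ ∑ p : Fin k × Fin k2, ‖vv p.2‖ * exc (AU U x) Q :=
      Finset.sum_le_sum fun p _ => hres2 p
    have h3 : ∑ l, ‖u l‖ * Metric.infDist x C = CU * Metric.infDist x C := by
      rw [hCU, Finset.sum_mul]
    have h4 : ∑ p : Fin k × Fin k2, ‖vv p.2‖ * exc (AU U x) Q = CV * exc (AU U x) Q := by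
      rw [hCV, Finset.sum_mul]
    linarith
  have hmain := hhoff x
  rw [hSeq]
  calc Metric.infDist x {x : EuclideanSpace ℝ (Fin n) | ∀ i, ⟪a i, x⟫ ≤ bv i}
      ≤ τ₀ * ∑ i, max (⟪a i, x⟫ - bv i) 0 := hmain
    _ ≤ τ₀ * (CU * Metric.infDist x C + CV * exc (AU U x) Q) :=
        mul_le_mul_of_nonneg_left hsum hτ₀.le
    _ ≤ τ₀ * B * (exc (AU U x) Q + Metric.infDist x C) := by
        rw [mul_assoc]
        refine mul_le_mul_of_nonneg_left ?_ hτ₀.le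
        have e1 : CU * Metric.infDist x C ≤ B * Metric.infDist x C :=
          mul_le_mul_of_nonneg_right (by simp only [hB]; linarith) hdC0
        have e2 : CV * exc (AU U x) Q ≤ B * exc (AU U x) Q :=
          mul_le_mul_of_nonneg_right (by simp only [hB]; linarith) hexc0
        nlinarith [e1, e2]
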